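/- Let h > 0 be a real number, N ≥ 1 a natural number, and p ≥ 3 a real number. Let u : ℤ → ℝ satisfy u_k ≥ 0 and u_k ≤ u_{k+1} for all k ∈ ℤ. If for every integer k with 0 ≤ k ≤ N−1 one has (u_{k+2} − u_{k+1})/h ≥ (p−2)·((k+2)·h)^{p−3}, then h·Σ_{k=0}^{N−1} u_{k+1}^p − (h·Σ_{k=0}^{N−1} u_{k−1})^{p−1} ≥ u_1^{p−2}·(u_1 − (p−1)·h^{p−2}) · h·Σ_{k=0}^{N−1} u_{k−1}. -/

import Mathlib

/-!
Put `A n = h ∑_{k<n} u_{k-1}` and `C = u₁^{p-2} (u₁ - (p-1) h^{p-2})`. The quantity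
`F n = h ∑_{k<n} u_{k+1}^p - (A n)^{p-1} - C · A n` vanishes at `0` and is nondecreasing: by
convexity of `x ↦ x^{p-1}` its increment is at least `h u_{n-1} G n`, where
`G n = u_{n+1}^{p-1} - (p-1) A_{n+1}^{p-2} - C`. Here `G 0 ≥ 0` because `u_{-1} ≤ u_1`, and `G` is
nondecreasing: since `A_{n+2} ≤ (n+2) h u_n`, the slope hypothesis makes the increment of
`u^{p-1}` dominate that of `(p-1) A^{p-2}`.
-/

open Real Finset

namespace Real

theorem rpow_add_mul_sub_le_rpow {q x y : ℝ} (hq : 1 ≤ q) (hx : 0 ≤ x) (hy : 0 ≤ y) :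
    x ^ q + q * x ^ (q - 1) * (y - x) ≤ y ^ q := by
  rcases hx.eq_or_lt with rfl | hx
  · rcases hq.eq_or_lt with rfl | hq
    · simp
    · rw [zero_rpow (by linarith), zero_rpow (by linarith)]
      simpa using rpow_nonneg hy q
  · have hbern := one_add_mul_self_le_rpow_one_add
      (by linarith [div_nonneg hy hx.le] : -1 ≤ y / x - 1) hq
    rw [add_sub_cancel, div_rpow hy hx.le, le_div_iff₀ (rpow_pos_of_pos hx q)] at hbern
    calc x ^ q + q * x ^ (q - 1) * (y - x)
        = (1 + q * (y / x - 1)) * x ^ q := by rw [rpow_sub_one hx.ne']; field_simp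
      _ ≤ y ^ q := hbern

theorem rpow_sub_rpow_le_mul_sub {q x y : ℝ} (hq : 1 ≤ q) (hx : 0 ≤ x) (hy : 0 ≤ y) :
    y ^ q - x ^ q ≤ q * y ^ (q - 1) * (y - x) := by
  linarith [rpow_add_mul_sub_le_rpow hq hy hx]

theorem rpow_sub_one_mul_self {q x : ℝ} (hq : q ≠ 0) (hx : 0 ≤ x) : x ^ (q - 1) * x = x ^ q := by
  rw [← rpow_add_one' hx (by simpa using hq), sub_add_cancel]

end Real

/-- `rhoIntegral h u n` is `∫_a^{a+nh} f(ρ x) Δx` on `a + hℤ`, where `u k = f (a + k h)`. -/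
def rhoIntegral (h : ℝ) (u : ℤ → ℝ) (n : ℕ) : ℝ := h * ∑ k ∈ range n, u (k - 1)

section

variable {h : ℝ} {u : ℤ → ℝ}

@[simp]
theorem rhoIntegral_zero : rhoIntegral h u 0 = 0 := by simp [rhoIntegral]

theorem rhoIntegral_succ (n : ℕ) :
    rhoIntegral h u (n + 1) = rhoIntegral h u n + h * u (n - 1) := by
  rw [rhoIntegral, sum_range_succ, mul_add, ← rhoIntegral]

theorem rhoIntegral_nonneg (hh : 0 ≤ h) (hu : ∀ k, 0 ≤ u k) (n : ℕ) : 0 ≤ rhoIntegral h u n :=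
  mul_nonneg hh (sum_nonneg fun _ _ ↦ hu _)

theorem rhoIntegral_succ_le_mul (hh : 0 ≤ h) (hu : Monotone u) (n : ℕ) :
    rhoIntegral h u (n + 1) ≤ (n + 1) * h * u (n - 1) := by
  have hle : ∀ k ∈ range (n + 1), u (k - 1) ≤ u (n - 1) := fun k hk ↦
    hu (by have := mem_range.mp hk; omega)
  calc rhoIntegral h u (n + 1) ≤ h * ∑ _k ∈ range (n + 1), u (n - 1) :=
        mul_le_mul_of_nonneg_left (sum_le_sum hle) hh
    _ = (n + 1) * h * u (n - 1) := by
      simp only [sum_const, card_range, nsmul_eq_mul, Nat.cast_add, Nat.cast_one]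
      ring

theorem rhoIntegral_rpow_succ_sub_le {q : ℝ} (hq : 1 ≤ q) (hh : 0 ≤ h) (hu₀ : ∀ k, 0 ≤ u k)
    (hu : Monotone u) (n : ℕ) :
    rhoIntegral h u (n + 1) ^ q - rhoIntegral h u n ^ q ≤
      q * ((n + 1) * h) ^ (q - 1) * h * u (n - 1) ^ q := by
  have hA₀ := rhoIntegral_nonneg hh hu₀
  calc rhoIntegral h u (n + 1) ^ q - rhoIntegral h u n ^ q
      ≤ q * rhoIntegral h u (n + 1) ^ (q - 1) * (h * u (n - 1)) := by
        simpa [rhoIntegral_succ] using rpow_sub_rpow_le_mul_sub hq (hA₀ n) (hA₀ (n + 1))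
    _ ≤ q * ((n + 1) * h * u (n - 1)) ^ (q - 1) * (h * u (n - 1)) := by
        have := rpow_le_rpow (hA₀ (n + 1)) (rhoIntegral_succ_le_mul hh hu n)
          (by linarith : 0 ≤ q - 1)
        gcongr
        exact mul_nonneg hh (hu₀ _)
    _ = q * ((n + 1) * h) ^ (q - 1) * h * u (n - 1) ^ q := by
        rw [mul_rpow (by positivity) (hu₀ _),
          ← rpow_sub_one_mul_self (q := q) (by linarith) (hu₀ (n - 1))]
        ring

theorem mul_rhoIntegral_rpow_sub_le_rpow_sub {p : ℝ} (hp : 3 ≤ p) (hh : 0 < h) (hu₀ : ∀ k, 0 ≤ u k)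
    (hu : Monotone u) (n : ℕ)
    (hslope : (p - 2) * ((n + 2) * h) ^ (p - 3) ≤ (u (n + 2) - u (n + 1)) / h) :
    (p - 1) * (rhoIntegral h u (n + 2) ^ (p - 2) - rhoIntegral h u (n + 1) ^ (p - 2)) ≤
      u (n + 2) ^ (p - 1) - u (n + 1) ^ (p - 1) := by
  have hjump : h * ((p - 2) * ((n + 2) * h) ^ (p - 3)) ≤ u (n + 2) - u (n + 1) := by
    rwa [le_div_iff₀ hh, mul_comm] at hslope
  have hA : rhoIntegral h u (n + 2) ^ (p - 2) - rhoIntegral h u (n + 1) ^ (p - 2) ≤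
      h * ((p - 2) * ((n + 2) * h) ^ (p - 3)) * u n ^ (p - 2) := by
    have := rhoIntegral_rpow_succ_sub_le (q := p - 2) (by linarith) hh.le hu₀ hu (n + 1)
    push_cast at this
    rw [add_sub_cancel_right, (by ring : (n : ℝ) + 1 + 1 = n + 2), (by ring : p - 2 - 1 = p - 3)]
      at this
    linarith
  have hun : u n ^ (p - 2) ≤ u (n + 1) ^ (p - 2) :=
    rpow_le_rpow (hu₀ n) (hu (by omega)) (by linarith)
  have htangent := rpow_add_mul_sub_le_rpow (by linarith : 1 ≤ p - 1) (hu₀ (n + 1)) (hu₀ (n + 2))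
  rw [(by ring : p - 1 - 1 = p - 2)] at htangent
  calc (p - 1) * (rhoIntegral h u (n + 2) ^ (p - 2) - rhoIntegral h u (n + 1) ^ (p - 2))
      ≤ (p - 1) * ((h * ((p - 2) * ((n + 2) * h) ^ (p - 3))) * u n ^ (p - 2)) :=
        mul_le_mul_of_nonneg_left hA (by linarith)
    _ ≤ (p - 1) * ((u (n + 2) - u (n + 1)) * u (n + 1) ^ (p - 2)) := by
        have hgrow := sub_nonneg.2 (hu (show (n : ℤ) + 1 ≤ n + 2 by omega))
        exact mul_le_mul_of_nonneg_left (mul_le_mul hjump hun (rpow_nonneg (hu₀ _) _) hgrow)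
          (by linarith)
    _ ≤ u (n + 2) ^ (p - 1) - u (n + 1) ^ (p - 1) := by linarith

theorem le_rpow_sub_mul_rhoIntegral_one {p : ℝ} (hp : 2 ≤ p) (hh : 0 ≤ h) (hu₀ : ∀ k, 0 ≤ u k)
    (hu : u (-1) ≤ u 1) :
    u 1 ^ (p - 2) * (u 1 - (p - 1) * h ^ (p - 2)) ≤
      u 1 ^ (p - 1) - (p - 1) * rhoIntegral h u 1 ^ (p - 2) := by
  have hA : rhoIntegral h u 1 ^ (p - 2) ≤ h ^ (p - 2) * u 1 ^ (p - 2) := by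
    rw [rhoIntegral, sum_range_one, mul_rpow hh (hu₀ _)]
    exact mul_le_mul_of_nonneg_left (rpow_le_rpow (hu₀ _) hu (by linarith)) (rpow_nonneg hh _)
  have := mul_le_mul_of_nonneg_left hA (by linarith : 0 ≤ p - 1)
  rw [← rpow_sub_one_mul_self (q := p - 1) (by linarith) (hu₀ 1), (by ring : p - 1 - 1 = p - 2)]
  linarith

theorem rhoIntegral_rpow_add_mul_le_sum {p C : ℝ} (hp : 2 ≤ p) (hh : 0 ≤ h) (hu₀ : ∀ k, 0 ≤ u k)
    (hu : Monotone u) {N : ℕ}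
    (hC : ∀ n < N, C ≤ u (n + 1) ^ (p - 1) - (p - 1) * rhoIntegral h u (n + 1) ^ (p - 2)) :
    rhoIntegral h u N ^ (p - 1) + C * rhoIntegral h u N ≤ h * ∑ k ∈ range N, u (k + 1) ^ p := by
  induction N with
  | zero => simp [zero_rpow (by linarith : p - 1 ≠ 0)]
  | succ N ih =>
    have hA := rpow_sub_rpow_le_mul_sub (by linarith : 1 ≤ p - 1) (rhoIntegral_nonneg hh hu₀ N)
      (rhoIntegral_nonneg hh hu₀ (N + 1))
    rw [(by ring : p - 1 - 1 = p - 2), rhoIntegral_succ, add_sub_cancel_left, ← rhoIntegral_succ]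
      at hA
    have hlast : ((p - 1) * rhoIntegral h u (N + 1) ^ (p - 2) + C) * (h * u (N - 1)) ≤
        h * u (N + 1) ^ p := by
      have hu₁ : 0 ≤ h * u (N - 1) := mul_nonneg hh (hu₀ _)
      calc ((p - 1) * rhoIntegral h u (N + 1) ^ (p - 2) + C) * (h * u (N - 1))
          ≤ u (N + 1) ^ (p - 1) * (h * u (N - 1)) := by
            have := hC N (by omega)
            exact mul_le_mul_of_nonneg_right (by linarith) hu₁
        _ ≤ u (N + 1) ^ (p - 1) * (h * u (N + 1)) :=
            mul_le_mul_of_nonneg_left (mul_le_mul_of_nonneg_left (hu (by omega)) hh)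
              (rpow_nonneg (hu₀ _) _)
        _ = h * u (N + 1) ^ p := by
            rw [← rpow_sub_one_mul_self (q := p) (by linarith) (hu₀ _)]
            ring
    have := ih fun n hn ↦ hC n (by omega)
    rw [sum_range_succ, mul_add, rhoIntegral_succ]
    rw [rhoIntegral_succ] at hA hlast
    linarith

end

theorem qi_time_scale_hZ_thm35_general
    (h : ℝ) (hh : 0 < h) (N : ℕ) (p : ℝ) (hp : 3 ≤ p)
    (u : ℤ → ℝ)
    (hnonneg : ∀ k : ℤ, 0 ≤ u k)
    (hmono : ∀ k : ℤ, u k ≤ u (k + 1))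
    (hyp : ∀ k : ℤ, 0 ≤ k → k ≤ (N : ℤ) - 1 →
      (p - 2) * (((k : ℝ) + 2) * h) ^ (p - 3) ≤ (u (k + 2) - u (k + 1)) / h) :
    h * ∑ k ∈ Finset.range N, u ((k : ℤ) + 1) ^ p -
        (h * ∑ k ∈ Finset.range N, u ((k : ℤ) - 1)) ^ (p - 1) ≥
      u 1 ^ (p - 2) * (u 1 - (p - 1) * h ^ (p - 2)) *
        (h * ∑ k ∈ Finset.range N, u ((k : ℤ) - 1)) := by
  have hu : Monotone u := monotone_int_of_le_succ hmono
  have hgap : ∀ n < N, u 1 ^ (p - 2) * (u 1 - (p - 1) * h ^ (p - 2)) ≤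
      u (n + 1) ^ (p - 1) - (p - 1) * rhoIntegral h u (n + 1) ^ (p - 2) := by
    intro n hn
    induction n with
    | zero =>
      simpa using le_rpow_sub_mul_rhoIntegral_one (by linarith) hh.le hnonneg (hu (by norm_num))
    | succ n ih =>
      have hstep := mul_rhoIntegral_rpow_sub_le_rpow_sub hp hh hnonneg hu n
        (by exact_mod_cast hyp n (by omega) (by omega))
      rw [Nat.cast_succ, add_assoc, one_add_one_eq_two]
      linarith [ih (by omega)]
  have hsum := rhoIntegral_rpow_add_mul_le_sum (by linarith) hh.le hnonneg hu hgap
  rw [rhoIntegral] at hsum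
  linarith

theorem qi_time_scale_hZ_thm35
    (h : ℝ) (hh : 0 < h) (N : ℕ) (hN : 1 ≤ N) (p : ℝ) (hp : 3 ≤ p)
    (u : ℤ → ℝ)
    (hnonneg : ∀ k : ℤ, 0 ≤ u k)
    (hmono : ∀ k : ℤ, u k ≤ u (k + 1))
    (hyp : ∀ k : ℤ, 0 ≤ k → k ≤ (N : ℤ) - 1 →
      (p - 2) * (((k : ℝ) + 2) * h) ^ (p - 3) ≤ (u (k + 2) - u (k + 1)) / h) :
    h * ∑ k ∈ Finset.range N, u ((k : ℤ) + 1) ^ p -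
        (h * ∑ k ∈ Finset.range N, u ((k : ℤ) - 1)) ^ (p - 1) ≥
      u 1 ^ (p - 2) * (u 1 - (p - 1) * h ^ (p - 2)) *
        (h * ∑ k ∈ Finset.range N, u ((k : ℤ) - 1)) :=
  qi_time_scale_hZ_thm35_general h hh N p hp u hnonneg hmono hyp
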